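/- arXiv:1512.03485 — 2 statements merged into one kernel-verified Lean document; each statement's English description precedes it below -/
import Mathlib

section
/- (Completeness of the allocation.) Let N be a positive integer and for each n let α_n > 0, e_n > 0, P_n ∈ ℝ. Let C ∈ ℝ satisfy C < Σ_n e_n (P_n − e_n)/α_n, and let p* maximize X(p) = Σ_n (P_n p_n − (α_n/2) p_n² − e_n p_n) over the budget set K = {p ∈ ℝ^N : Σ_n e_n p_n ≤ C}. Then the budget constraint binds: Σ_n e_n p*_n = C, i.e. the allocation is complete. -/
/-- Completeness of the allocation: if the budget satisfies
`C < Σ_n e_n (P_n − e_n)/α_n` and `p*` maximizes the social welfare over the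
budget set `K = {p : Σ_n e_n p_n ≤ C}`, then the budget constraint binds:
`Σ_n e_n p*_n = C`. -/
theorem allocation_complete (N : ℕ) (hN : 0 < N)
    (α e P : Fin N → ℝ) (hα : ∀ n, 0 < α n) (he : ∀ n, 0 < e n) (C : ℝ)
    (hC : C < ∑ n, e n * (P n - e n) / α n)
    (pstar : Fin N → ℝ) (hpstar : ∑ n, e n * pstar n ≤ C)
    (hopt : ∀ p : Fin N → ℝ, (∑ n, e n * p n ≤ C) →
      (∑ n, (P n * p n - α n / 2 * (p n) ^ 2 - e n * p n)) ≤
      (∑ n, (P n * pstar n - α n / 2 * (pstar n) ^ 2 - e n * pstar n))) :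
    ∑ n, e n * pstar n = C := by
  by_contra hne
  have hS : ∑ k, e k * pstar k < C := lt_of_le_of_ne hpstar hne
  -- there is a coordinate with positive gradient
  have hex : ∃ n, 0 < P n - e n - α n * pstar n := by
    by_contra h
    push_neg at h
    have hle : ∑ k, e k * (P k - e k) / α k ≤ ∑ k, e k * pstar k := by
      apply Finset.sum_le_sum
      intro i _
      have hαi := hα i; have hei := he i
      have h1 : P i - e i ≤ α i * pstar i := by linarith [h i]
      rw [div_le_iff₀ hαi]
      nlinarith
    linarith
  obtain ⟨n, hg⟩ := hex
  set g := P n - e n - α n * pstar n with hgdef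
  set S := ∑ k, e k * pstar k with hSdef
  set ε := min ((C - S) / e n) (g / α n) with hεdef
  have hε : 0 < ε := lt_min (div_pos (by linarith) (he n)) (div_pos hg (hα n))
  have hεg : α n * ε ≤ g := by
    have := min_le_right ((C - S) / e n) (g / α n)
    calc α n * ε ≤ α n * (g / α n) := by
          exact mul_le_mul_of_nonneg_left this (hα n).le
      _ = g := mul_div_cancel₀ g (hα n).ne'
  have hεb : e n * ε ≤ C - S := by
    have := min_le_left ((C - S) / e n) (g / α n)
    calc e n * ε ≤ e n * ((C - S) / e n) := by
          exact mul_le_mul_of_nonneg_left this (he n).le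
      _ = C - S := mul_div_cancel₀ _ (he n).ne'
  set p := Function.update pstar n (pstar n + ε) with hpdef
  have hsplit : ∀ (q : Fin N → ℝ) (F : Fin N → ℝ → ℝ),
      ∑ k, F k (q k) = F n (q n) + ∑ k ∈ Finset.univ.erase n, F k (q k) :=
    fun q F => (Finset.add_sum_erase _ (fun k => F k (q k)) (Finset.mem_univ n)).symm
  have hrest : ∀ (F : Fin N → ℝ → ℝ),
      ∑ k ∈ Finset.univ.erase n, F k (p k) = ∑ k ∈ Finset.univ.erase n, F k (pstar k) := by
    intro F
    apply Finset.sum_congr rfl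
    intro k hk
    rw [hpdef, Function.update_of_ne (Finset.ne_of_mem_erase hk)]
  have hpn : p n = pstar n + ε := by rw [hpdef, Function.update_self]
  have hbudget : ∑ k, e k * p k ≤ C := by
    rw [hsplit p (fun k x => e k * x), hrest (fun k x => e k * x), hpn]
    have : S = e n * pstar n + ∑ k ∈ Finset.univ.erase n, e k * pstar k := by
      rw [hSdef, hsplit pstar (fun k x => e k * x)]
    nlinarith
  have hle := hopt p hbudget
  rw [hsplit p (fun k x => P k * x - α k / 2 * x ^ 2 - e k * x),
      hrest (fun k x => P k * x - α k / 2 * x ^ 2 - e k * x),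
      hsplit pstar (fun k x => P k * x - α k / 2 * x ^ 2 - e k * x), hpn] at hle
  nlinarith [hα n, mul_pos hε hg]
end

section
/- (KKT characterization / closed form of the cake cutting solution.) Let N be a positive integer and for each n let α_n > 0, e_n > 0, P_n ∈ ℝ. Let C ∈ ℝ satisfy C < Σ_n e_n (P_n − e_n)/α_n. Define τ = (Σ_m e_m (P_m − e_m)/α_m − C) / (Σ_m e_m²/α_m) and p*_n = (P_n − e_n − τ e_n)/α_n for each n. Then τ > 0, Σ_n e_n p*_n = C, and p* maximizes X(p) = Σ_n (P_n p_n − (α_n/2) p_n² − e_n p_n) over the budget set K = {p ∈ ℝ^N : Σ_n e_n p_n ≤ C}; moreover p*_n < (P_n − e_n)/α_n for every n. -/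
/-- KKT characterization / closed form of the cake cutting solution. With
`τ = (Σ_m e_m (P_m − e_m)/α_m − C) / (Σ_m e_m²/α_m)` and
`p*_n = (P_n − e_n − τ e_n)/α_n`, we have `τ > 0`, the budget binds,
`p*` maximizes the social welfare over the budget set, and
`p*_n < (P_n − e_n)/α_n` for every `n`. -/
theorem kkt_closed_form_solution (N : ℕ) (hN : 0 < N)
    (α e P : Fin N → ℝ) (hα : ∀ n, 0 < α n) (he : ∀ n, 0 < e n) (C : ℝ)
    (hC : C < ∑ n, e n * (P n - e n) / α n)
    (τ : ℝ) (hτ : τ = (∑ m, e m * (P m - e m) / α m - C) / (∑ m, (e m) ^ 2 / α m))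
    (pstar : Fin N → ℝ) (hp : ∀ n, pstar n = (P n - e n - τ * e n) / α n) :
    0 < τ ∧ (∑ n, e n * pstar n = C) ∧
    (∀ p : Fin N → ℝ, (∑ n, e n * p n ≤ C) →
      (∑ n, (P n * p n - α n / 2 * (p n) ^ 2 - e n * p n)) ≤
      (∑ n, (P n * pstar n - α n / 2 * (pstar n) ^ 2 - e n * pstar n))) ∧
    (∀ n, pstar n < (P n - e n) / α n) := by
  have hS : 0 < ∑ m, (e m) ^ 2 / α m := by
    apply Finset.sum_pos
    · intro i _
      exact div_pos (pow_pos (he i) 2) (hα i)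
    · haveI : Nonempty (Fin N) := Fin.pos_iff_nonempty.mp hN
      exact Finset.univ_nonempty
  have hτpos : 0 < τ := by
    rw [hτ]
    exact div_pos (by linarith) hS
  -- the key per-term relation: α n * pstar n = P n - e n - τ * e n
  have hkey : ∀ n, α n * pstar n = P n - e n - τ * e n := by
    intro n
    rw [hp n, mul_div_cancel₀ _ (ne_of_gt (hα n))]
  have hbudget : ∑ n, e n * pstar n = C := by
    have : ∀ n, e n * pstar n = e n * (P n - e n) / α n - τ * ((e n) ^ 2 / α n) := by
      intro n
      rw [hp n]
      field_simp
    rw [Finset.sum_congr rfl fun n _ => this n, Finset.sum_sub_distrib,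
      ← Finset.mul_sum, hτ, div_mul_cancel₀ _ (ne_of_gt hS)]
    ring
  refine ⟨hτpos, hbudget, ?_, ?_⟩
  · intro p hpC
    have hterm : ∀ n, P n * p n - α n / 2 * (p n) ^ 2 - e n * p n ≤
        (P n * pstar n - α n / 2 * (pstar n) ^ 2 - e n * pstar n)
          + τ * (e n * p n - e n * pstar n) := by
      intro n
      have hP : P n = α n * pstar n + e n + τ * e n := by linarith [hkey n]
      rw [hP]
      nlinarith [mul_nonneg (hα n).le (sq_nonneg (p n - pstar n))]
    calc ∑ n, (P n * p n - α n / 2 * (p n) ^ 2 - e n * p n)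
        ≤ ∑ n, ((P n * pstar n - α n / 2 * (pstar n) ^ 2 - e n * pstar n)
            + τ * (e n * p n - e n * pstar n)) :=
          Finset.sum_le_sum fun n _ => hterm n
      _ = (∑ n, (P n * pstar n - α n / 2 * (pstar n) ^ 2 - e n * pstar n))
            + τ * ((∑ n, e n * p n) - ∑ n, e n * pstar n) := by
          rw [Finset.sum_add_distrib, ← Finset.mul_sum, ← Finset.sum_sub_distrib]
      _ ≤ ∑ n, (P n * pstar n - α n / 2 * (pstar n) ^ 2 - e n * pstar n) := by
          rw [hbudget]
          nlinarith
  · intro n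
    rw [hp n]
    exact (div_lt_div_iff_of_pos_right (hα n)).mpr (by nlinarith [mul_pos hτpos (he n)])
end
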